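/- arXiv:1310.5420 — 2 statements merged into one kernel-verified Lean document; each statement's English description precedes it below -/
import Mathlib

section
/- For every 0 ≤ m ≤ n, let ŷ be the jammer strategy with ŷ_0 = Z_m/Z_0, ŷ_j = Z_m·(Z_j^{−1} − Z_{j−1}^{−1}) for 1 ≤ j ≤ m, and ŷ_j = 0 for j > m. Then for every mixed strategy x of the transmitter, xᵀZŷ = Z_m·Σ_{i=0}^m x_i + Σ_{i=m+1}^n Z_i·x_i, and consequently xᵀZŷ ≤ Z_m. -/
open Finset

/-- A mixed strategy on `{0, …, n}`: nonnegative entries summing to 1. -/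
def IsMixed (n : ℕ) (x : ℕ → ℝ) : Prop :=
  (∀ i ∈ Finset.range (n + 1), 0 ≤ x i) ∧ ∑ i ∈ Finset.range (n + 1), x i = 1

/-- Expected payoff `xᵀ Z y` for the lower-triangular payoff matrix `Z(i,j) = Zᵢ` if `j ≤ i`,
`0` otherwise. -/
noncomputable def pay (n : ℕ) (Z : ℕ → ℝ) (x y : ℕ → ℝ) : ℝ :=
  ∑ i ∈ Finset.range (n + 1), ∑ j ∈ Finset.range (n + 1),
    x i * (if j ≤ i then Z i else 0) * y j

/-- The average jamming power of the strategy `y`. -/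
noncomputable def avgPow (n : ℕ) (J y : ℕ → ℝ) : ℝ :=
  ∑ j ∈ Finset.range (n + 1), y j * J j

/-- The jammer's feasible set: mixed strategies of average power at most `Jave`. -/
def YLE (n : ℕ) (J : ℕ → ℝ) (Jave : ℝ) (y : ℕ → ℝ) : Prop :=
  IsMixed n y ∧ avgPow n J y ≤ Jave

/-- The critical average jamming power `J_{ave,m} = Z_m ∑_{j=1}^m (Z_j⁻¹ - Z_{j-1}⁻¹) J_j`. -/
noncomputable def JaveM (m : ℕ) (J Z : ℕ → ℝ) : ℝ :=
  Z m * ∑ j ∈ Finset.Icc 1 m, ((Z j)⁻¹ - (Z (j - 1))⁻¹) * J j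

/-!
Against `ŷ`, the probability `ŷ_0 + ⋯ + ŷ_i` that the jammer uses a level `j ≤ i` telescopes to
`Z_m / Z_{min i m}`, so the pure strategy `i` earns `Z_i Z_m / Z_{min i m} = Z_{max i m}`.
Both claims follow, the bound because `Z` is decreasing.
-/

noncomputable def yHat (Z : ℕ → ℝ) (m : ℕ) (j : ℕ) : ℝ :=
  if j = 0 then Z m / Z 0 else if j ≤ m then Z m * ((Z j)⁻¹ - (Z (j - 1))⁻¹) else 0

lemma pay_eq_sum_mul_sum_range (n : ℕ) (Z x y : ℕ → ℝ) :
    pay n Z x y = ∑ i ∈ range (n + 1), x i * Z i * ∑ j ∈ range (i + 1), y j := by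
  refine sum_congr rfl fun i hi => ?_
  have hfilter : (range (n + 1)).filter (· ≤ i) = range (i + 1) := by
    ext j; simp only [mem_filter, mem_range] at hi ⊢; omega
  simp_rw [mul_ite, ite_mul, mul_zero, zero_mul, ← sum_filter, hfilter, mul_sum]

lemma sum_range_yHat (Z : ℕ → ℝ) (m i : ℕ) :
    ∑ j ∈ range (i + 1), yHat Z m j = Z m / Z (min i m) := by
  induction i with
  | zero => simp [yHat]
  | succ i ih =>
    rw [sum_range_succ, ih, yHat, if_neg i.succ_ne_zero]
    by_cases h : i + 1 ≤ m
    · rw [if_pos h, min_eq_left h, min_eq_left (by omega), Nat.add_sub_cancel]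
      ring
    · rw [if_neg h, min_eq_right (by omega), min_eq_right (by omega), add_zero]

lemma mul_div_min_eq_max {Z : ℕ → ℝ} {i m : ℕ} (h : Z (min i m) ≠ 0) :
    Z i * (Z m / Z (min i m)) = Z (max i m) := by
  rcases le_total i m with him | hmi
  · simp only [min_eq_left him, max_eq_right him] at h ⊢
    field_simp
  · simp only [min_eq_right hmi, max_eq_left hmi] at h ⊢
    field_simp

lemma pay_yHat {n m : ℕ} {Z : ℕ → ℝ} (hZ : ∀ i ≤ n, Z i ≠ 0) (hm : m ≤ n) (x : ℕ → ℝ) :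
    pay n Z x (yHat Z m) = ∑ i ∈ range (n + 1), x i * Z (max i m) := by
  rw [pay_eq_sum_mul_sum_range]
  refine sum_congr rfl fun i _ => ?_
  have hmin : min i m ≤ n := (min_le_right i m).trans hm
  rw [sum_range_yHat, mul_assoc, mul_div_min_eq_max (hZ _ hmin)]

lemma sum_range_mul_max_eq {n m : ℕ} (hm : m ≤ n) (Z x : ℕ → ℝ) :
    ∑ i ∈ range (n + 1), x i * Z (max i m)
      = Z m * ∑ i ∈ range (m + 1), x i + ∑ i ∈ Icc (m + 1) n, Z i * x i := by
  rw [← sum_range_add_sum_Ico _ (by omega : m + 1 ≤ n + 1), Ico_add_one_right_eq_Icc, mul_sum]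
  congr 1
  · refine sum_congr rfl fun i hi => ?_
    rw [max_eq_right (by simpa [Nat.lt_succ_iff] using hi), mul_comm]
  · refine sum_congr rfl fun i hi => ?_
    rw [max_eq_left (by simp at hi; omega), mul_comm]

lemma sum_mul_max_le {n m : ℕ} {Z x : ℕ → ℝ} (hZ : AntitoneOn Z (Set.Iic n)) (hm : m ≤ n)
    (hx : IsMixed n x) : ∑ i ∈ range (n + 1), x i * Z (max i m) ≤ Z m := by
  obtain ⟨hx_nonneg, hx_sum⟩ := hx
  calc ∑ i ∈ range (n + 1), x i * Z (max i m)
      ≤ ∑ i ∈ range (n + 1), x i * Z m := by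
        refine sum_le_sum fun i hi => mul_le_mul_of_nonneg_left ?_ (hx_nonneg i hi)
        have hi : i ≤ n := Nat.lt_succ_iff.mp (mem_range.mp hi)
        exact hZ (Set.mem_Iic.mpr hm) (Set.mem_Iic.mpr (max_le hi hm)) (le_max_right i m)
    _ = Z m := by rw [← sum_mul, hx_sum, one_mul]

theorem stmt_4_general (n : ℕ) (Z : ℕ → ℝ)
    (hZanti : ∀ j < n, Z (j + 1) < Z j) (hZpos : 0 < Z n)
    (m : ℕ) (hm : m ≤ n) (yhat : ℕ → ℝ)
    (hy : ∀ j, yhat j = if j = 0 then Z m / Z 0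
      else if j ≤ m then Z m * ((Z j)⁻¹ - (Z (j - 1))⁻¹) else 0) :
    ∀ x : ℕ → ℝ, IsMixed n x →
      pay n Z x yhat
        = Z m * ∑ i ∈ Finset.range (m + 1), x i + ∑ i ∈ Finset.Icc (m + 1) n, Z i * x i ∧
      pay n Z x yhat ≤ Z m := by
  intro x hx
  have hyhat : yhat = yHat Z m := funext hy
  have hZ : AntitoneOn Z (Set.Iic n) :=
    (strictAntiOn_Iic_of_succ_lt fun j hj => by simpa using hZanti j hj).antitoneOn
  have hZne : ∀ i ≤ n, Z i ≠ 0 := fun i hi =>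
    (hZpos.trans_le (hZ (Set.mem_Iic.mpr hi) Set.self_mem_Iic hi)).ne'
  rw [hyhat, pay_yHat hZne hm]
  exact ⟨sum_range_mul_max_eq hm Z x, sum_mul_max_le hZ hm hx⟩

/-- against `ŷ`, the expected payoff of any mixed strategy `x` equals
`Z_m ∑_{i=0}^m x_i + ∑_{i=m+1}^n Z_i x_i`, hence is at most `Z_m`. -/
theorem stmt_4 (n : ℕ) (hn : 1 ≤ n) (J Z : ℕ → ℝ)
    (hJ0 : J 0 = 0) (hJmono : ∀ j < n, J j < J (j + 1))
    (hZanti : ∀ j < n, Z (j + 1) < Z j) (hZpos : 0 < Z n)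
    (m : ℕ) (hm : m ≤ n) (yhat : ℕ → ℝ)
    (hy : ∀ j, yhat j = if j = 0 then Z m / Z 0
      else if j ≤ m then Z m * ((Z j)⁻¹ - (Z (j - 1))⁻¹) else 0) :
    ∀ x : ℕ → ℝ, IsMixed n x →
      pay n Z x yhat
        = Z m * ∑ i ∈ Finset.range (m + 1), x i + ∑ i ∈ Finset.Icc (m + 1) n, Z i * x i ∧
      pay n Z x yhat ≤ Z m :=
  stmt_4_general n Z hZanti hZpos m hm yhat hy
end

section
/- Fix 0 ≤ m < n and set J_ave = J_{ave,m}. Let x̂ be the transmitter strategy with x̂_i = Z_m·(J_{i+1} − J_i)/((J_{m+1} − J_{ave,m})·Z_i) for 0 ≤ i ≤ m and x̂_i = 0 for i > m, and let ŷ be the jammer strategy with ŷ_0 = Z_m/Z_0, ŷ_j = Z_m·(Z_j^{−1} − Z_{j−1}^{−1}) for 1 ≤ j ≤ m, and ŷ_j = 0 for j > m. Then ŷ ∈ Y_LE(J_{ave,m}), the pair (x̂, ŷ) is a Nash equilibrium of the constrained game, and the value of the game at this equilibrium is x̂ᵀZŷ = Z_m; that is, xᵀZŷ ≤ Z_m for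 every mixed strategy x, and x̂ᵀZy ≥ Z_m for every y ∈ Y_LE(J_{ave,m}). -/
/-!
Against `ŷ` the partial sums `∑_{j ≤ i} ŷ_j = Z_m / Z_i` telescope, so every row `i ≤ m` of `Z`
pays exactly `Z_m` and every row `i > m` pays `Z_i ≤ Z_m`. Against `x̂` the column payoff
`∑_{i ≥ j} x̂_i Z_i` telescopes to `c (J_{m+1} - J_j)` for `j ≤ m`, where
`c = Z_m / (J_{m+1} - J_{ave,m})`, and vanishes beyond `m`, where `c (J_{m+1} - J_j) ≤ 0`.
Averaging this affine lower bound against a jammer strategy of power at most `J_{ave,m}` gives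
at least `c (J_{m+1} - J_{ave,m}) = Z_m`, with equality at `ŷ`, whose power is exactly `J_{ave,m}`.
Computing `x̂ᵀ Z ŷ` by rows as `Z_m ∑ x̂_i` then shows that `x̂` sums to `1`.
-/

open Finset

theorem monotoneOn_Iic_of_le_succ {α : Type*} [Preorder α] {f : ℕ → α} {n : ℕ}
    (h : ∀ j < n, f j ≤ f (j + 1)) : MonotoneOn f (Set.Iic n) := by
  intro i _ j hj hij
  induction j, hij using Nat.le_induction with
  | base => exact le_rfl
  | succ k _ ih => exact (ih (Set.mem_Iic.2 (Nat.le_of_succ_le hj))).trans (h k hj)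

theorem antitoneOn_Iic_of_succ_le {α : Type*} [Preorder α] {f : ℕ → α} {n : ℕ}
    (h : ∀ j < n, f (j + 1) ≤ f j) : AntitoneOn f (Set.Iic n) :=
  monotoneOn_Iic_of_le_succ (α := αᵒᵈ) h

theorem pos_of_antitoneOn_Iic {Z : ℕ → ℝ} {m : ℕ}
    (hZ : AntitoneOn Z (Set.Iic m)) (hZm : 0 < Z m) {i : ℕ} (hi : i ≤ m) : 0 < Z i :=
  hZm.trans_le (hZ hi Set.self_mem_Iic hi)

section Payoff

variable {n : ℕ} {J Z x y : ℕ → ℝ}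

theorem pay_eq_sum_row :
    pay n Z x y = ∑ i ∈ range (n + 1), x i * (Z i * ∑ j ∈ range (i + 1), y j) := by
  refine sum_congr rfl fun i hi => ?_
  have : range (i + 1) = (range (n + 1)).filter (· ≤ i) := by
    ext j; simp only [mem_range, mem_filter] at hi ⊢; omega
  simp only [this, sum_filter, mul_sum, mul_ite, ite_mul, mul_zero, zero_mul, mul_assoc]

theorem pay_eq_sum_col :
    pay n Z x y = ∑ j ∈ range (n + 1), (∑ i ∈ Ico j (n + 1), x i * Z i) * y j := by
  rw [pay, sum_comm]
  refine sum_congr rfl fun j _ => ?_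
  have : Ico j (n + 1) = (range (n + 1)).filter (j ≤ ·) := by
    ext i; simp only [mem_Ico, mem_range, mem_filter]; omega
  simp only [this, sum_filter, sum_mul, mul_ite, ite_mul, mul_zero, zero_mul]

theorem sum_sub_mul_eq_sub_avgPow (hy : IsMixed n y) (b : ℝ) :
    ∑ j ∈ range (n + 1), (b - J j) * y j = b - avgPow n J y := by
  simp only [sub_mul, sum_sub_distrib, ← mul_sum, hy.2, mul_one, avgPow, mul_comm (J _)]

theorem avgPow_le_of_support_le {m : ℕ} (hJ : MonotoneOn J (Set.Iic n)) (hmn : m ≤ n)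
    (hy : IsMixed n y) (hsupp : ∀ j, m < j → y j = 0) : avgPow n J y ≤ J m := by
  calc avgPow n J y ≤ ∑ j ∈ range (n + 1), y j * J m := by
        refine sum_le_sum fun j hj => ?_
        rcases le_or_gt j m with hjm | hjm
        · exact mul_le_mul_of_nonneg_left (hJ (hjm.trans hmn) hmn hjm) (hy.1 j hj)
        · simp [hsupp j hjm]
    _ = J m := by rw [← sum_mul, hy.2, one_mul]

theorem pay_le_of_row_le {v : ℝ} (hx : IsMixed n x)
    (hrow : ∀ i ≤ n, Z i * ∑ j ∈ range (i + 1), y j ≤ v) : pay n Z x y ≤ v := by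
  calc pay n Z x y ≤ ∑ i ∈ range (n + 1), x i * v := by
        rw [pay_eq_sum_row]
        exact sum_le_sum fun i hi =>
          mul_le_mul_of_nonneg_left (hrow i (Nat.lt_succ_iff.1 (mem_range.1 hi))) (hx.1 i hi)
    _ = v := by rw [← sum_mul, hx.2, one_mul]

theorem pay_eq_of_row_eq {v : ℝ} (hrow : ∀ i ≤ n, x i ≠ 0 → Z i * ∑ j ∈ range (i + 1), y j = v) :
    pay n Z x y = v * ∑ i ∈ range (n + 1), x i := by
  rw [pay_eq_sum_row, mul_sum]
  refine sum_congr rfl fun i hi => ?_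
  rcases eq_or_ne (x i) 0 with h | h
  · simp [h]
  · rw [hrow i (Nat.lt_succ_iff.1 (mem_range.1 hi)) h, mul_comm]

theorem le_pay_of_le_col {c b Jave : ℝ} (hc : 0 ≤ c) (hy : YLE n J Jave y)
    (hcol : ∀ j ≤ n, c * (b - J j) ≤ ∑ i ∈ Ico j (n + 1), x i * Z i) :
    c * (b - Jave) ≤ pay n Z x y := by
  calc c * (b - Jave) ≤ c * (b - avgPow n J y) := by gcongr; exact hy.2
    _ = ∑ j ∈ range (n + 1), c * (b - J j) * y j := by
        simp only [mul_assoc, ← mul_sum, sum_sub_mul_eq_sub_avgPow hy.1]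
    _ ≤ pay n Z x y := by
        rw [pay_eq_sum_col]
        exact sum_le_sum fun j hj =>
          mul_le_mul_of_nonneg_right (hcol j (Nat.lt_succ_iff.1 (mem_range.1 hj))) (hy.1.1 j hj)

theorem pay_eq_of_col_eq {c b : ℝ} (hy : IsMixed n y)
    (hcol : ∀ j ≤ n, y j ≠ 0 → ∑ i ∈ Ico j (n + 1), x i * Z i = c * (b - J j)) :
    pay n Z x y = c * (b - avgPow n J y) := by
  rw [pay_eq_sum_col, ← sum_sub_mul_eq_sub_avgPow hy, mul_sum]
  refine sum_congr rfl fun j hj => ?_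
  rcases eq_or_ne (y j) 0 with h | h
  · simp [h]
  · rw [hcol j (Nat.lt_succ_iff.1 (mem_range.1 hj)) h, mul_assoc]

end Payoff

noncomputable def jammerStrategy (m : ℕ) (Z : ℕ → ℝ) (j : ℕ) : ℝ :=
  if j = 0 then Z m / Z 0 else if j ≤ m then Z m * ((Z j)⁻¹ - (Z (j - 1))⁻¹) else 0

noncomputable def transmitterStrategy (m : ℕ) (J Z : ℕ → ℝ) (i : ℕ) : ℝ :=
  if i ≤ m then Z m * (J (i + 1) - J i) / ((J (m + 1) - JaveM m J Z) * Z i) else 0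

section Equilibrium

variable {n m : ℕ} {J Z : ℕ → ℝ}

theorem jammerStrategy_of_lt {j : ℕ} (h : m < j) : jammerStrategy m Z j = 0 := by
  rw [jammerStrategy, if_neg (by omega), if_neg (by omega)]

theorem transmitterStrategy_of_lt {i : ℕ} (h : m < i) : transmitterStrategy m J Z i = 0 := by
  rw [transmitterStrategy, if_neg (by omega)]

theorem sum_range_jammerStrategy (hZ : ∀ i ≤ m, Z i ≠ 0) {k : ℕ} (hk : k ≤ m) :
    ∑ j ∈ range (k + 1), jammerStrategy m Z j = Z m / Z k := by
  induction k with
  | zero => simp [jammerStrategy]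
  | succ k ih =>
    have := hZ k (by omega)
    have := hZ (k + 1) hk
    rw [sum_range_succ, ih (by omega), jammerStrategy, if_neg k.succ_ne_zero, if_pos hk,
      Nat.add_sub_cancel]
    field_simp
    ring

theorem sum_range_jammerStrategy_of_le (hZ : ∀ i ≤ m, Z i ≠ 0) {k : ℕ} (hk : m ≤ k) :
    ∑ j ∈ range (k + 1), jammerStrategy m Z j = 1 := by
  rw [← sum_subset (range_subset_range.2 (by omega : m + 1 ≤ k + 1)),
    sum_range_jammerStrategy hZ le_rfl, div_self (hZ m le_rfl)]
  intro j _ hj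
  exact jammerStrategy_of_lt (by simpa using hj)

theorem jammerStrategy_nonneg (hZ : AntitoneOn Z (Set.Iic m)) (hZm : 0 < Z m) (j : ℕ) :
    0 ≤ jammerStrategy m Z j := by
  have hpos : ∀ i ≤ m, 0 < Z i := fun i hi => pos_of_antitoneOn_Iic hZ hZm hi
  unfold jammerStrategy
  split_ifs with h0 hjm
  · exact div_nonneg hZm.le (hpos 0 m.zero_le).le
  · have : (Z (j - 1))⁻¹ ≤ (Z j)⁻¹ :=
      inv_anti₀ (hpos j hjm) (hZ (Set.mem_Iic.2 (by omega)) hjm (Nat.sub_le j 1))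
    exact mul_nonneg hZm.le (sub_nonneg.2 this)
  · exact le_rfl

theorem isMixed_jammerStrategy (hZ : AntitoneOn Z (Set.Iic m)) (hZm : 0 < Z m) (hmn : m ≤ n) :
    IsMixed n (jammerStrategy m Z) :=
  ⟨fun j _ => jammerStrategy_nonneg hZ hZm j,
    sum_range_jammerStrategy_of_le (fun _ hi => (pos_of_antitoneOn_Iic hZ hZm hi).ne') hmn⟩

theorem avgPow_jammerStrategy (hJ0 : J 0 = 0) (hmn : m ≤ n) :
    avgPow n J (jammerStrategy m Z) = JaveM m J Z := by
  have hsub : Icc 1 m ⊆ range (n + 1) := fun j hj => by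
    simp only [mem_Icc, mem_range] at hj ⊢; omega
  rw [avgPow, JaveM, mul_sum, ← sum_subset hsub fun j _ hj => ?_]
  · refine sum_congr rfl fun j hj => ?_
    rw [mem_Icc] at hj
    rw [jammerStrategy, if_neg (by omega), if_pos hj.2]
    ring
  · rcases Nat.eq_zero_or_pos j with rfl | hj0
    · rw [hJ0, mul_zero]
    · rw [jammerStrategy_of_lt (by simp only [mem_Icc, not_and, not_le] at hj; omega), zero_mul]

theorem JaveM_lt (hJ0 : J 0 = 0) (hJ : MonotoneOn J (Set.Iic m)) (hJm : J m < J (m + 1))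
    (hZ : AntitoneOn Z (Set.Iic m)) (hZm : 0 < Z m) : JaveM m J Z < J (m + 1) :=
  calc JaveM m J Z = avgPow m J (jammerStrategy m Z) := (avgPow_jammerStrategy hJ0 le_rfl).symm
    _ ≤ J m := avgPow_le_of_support_le hJ le_rfl (isMixed_jammerStrategy hZ hZm le_rfl)
        fun _ => jammerStrategy_of_lt
    _ < J (m + 1) := hJm

theorem transmitterStrategy_nonneg (hJ : MonotoneOn J (Set.Iic (m + 1)))
    (hZ : AntitoneOn Z (Set.Iic m)) (hZm : 0 < Z m) (hD : JaveM m J Z < J (m + 1)) (i : ℕ) :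
    0 ≤ transmitterStrategy m J Z i := by
  unfold transmitterStrategy
  split_ifs with him
  · refine div_nonneg (mul_nonneg hZm.le (sub_nonneg.2 (hJ ?_ ?_ (Nat.le_succ i))))
      (mul_nonneg (sub_nonneg.2 hD.le) (pos_of_antitoneOn_Iic hZ hZm him).le)
    all_goals simp only [Set.mem_Iic]; omega
  · exact le_rfl

theorem sum_Ico_transmitterStrategy_mul (hZ : ∀ i ≤ m, Z i ≠ 0) (hmn : m ≤ n) {j : ℕ}
    (hj : j ≤ m) : ∑ i ∈ Ico j (n + 1), transmitterStrategy m J Z i * Z i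
      = Z m / (J (m + 1) - JaveM m J Z) * (J (m + 1) - J j) := by
  rw [← sum_subset (Ico_subset_Ico_right (by omega : m + 1 ≤ n + 1)) fun i hi hi' => ?_]
  · rw [← sum_Ico_sub J (by omega : j ≤ m + 1), mul_sum]
    refine sum_congr rfl fun i hi => ?_
    rw [mem_Ico] at hi
    have := hZ i (by omega)
    rw [transmitterStrategy, if_pos (by omega)]
    field_simp
  · simp only [mem_Ico] at hi hi'
    rw [transmitterStrategy_of_lt (by omega), zero_mul]

theorem row_jammerStrategy (hZ : ∀ i ≤ m, Z i ≠ 0) {i : ℕ} (hi : i ≤ m) :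
    Z i * ∑ j ∈ range (i + 1), jammerStrategy m Z j = Z m := by
  rw [sum_range_jammerStrategy hZ hi, mul_div_cancel₀ _ (hZ i hi)]

theorem pay_jammerStrategy_le (hZ : AntitoneOn Z (Set.Iic n)) (hZn : 0 < Z n) (hmn : m ≤ n)
    {x : ℕ → ℝ} (hx : IsMixed n x) : pay n Z x (jammerStrategy m Z) ≤ Z m := by
  have hZ0 : ∀ i ≤ m, Z i ≠ 0 := fun i hi => (pos_of_antitoneOn_Iic hZ hZn (hi.trans hmn)).ne'
  refine pay_le_of_row_le hx fun i hi => ?_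
  rcases le_or_gt i m with him | him
  · exact (row_jammerStrategy hZ0 him).le
  · rw [sum_range_jammerStrategy_of_le hZ0 him.le, mul_one]
    exact hZ hmn hi him.le

theorem le_pay_transmitterStrategy (hJ : MonotoneOn J (Set.Iic n))
    (hZ : AntitoneOn Z (Set.Iic n)) (hZn : 0 < Z n) (hm : m < n)
    (hD : JaveM m J Z < J (m + 1)) {y : ℕ → ℝ} (hy : YLE n J (JaveM m J Z) y) :
    Z m ≤ pay n Z (transmitterStrategy m J Z) y := by
  have hZ0 : ∀ i ≤ m, Z i ≠ 0 := fun i hi => (pos_of_antitoneOn_Iic hZ hZn (hi.trans hm.le)).ne'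
  have hc : 0 ≤ Z m / (J (m + 1) - JaveM m J Z) :=
    div_nonneg (pos_of_antitoneOn_Iic hZ hZn hm.le).le (sub_pos.2 hD).le
  calc Z m = Z m / (J (m + 1) - JaveM m J Z) * (J (m + 1) - JaveM m J Z) :=
        (div_mul_cancel₀ _ (sub_pos.2 hD).ne').symm
    _ ≤ _ := le_pay_of_le_col hc hy fun j hj => ?_
  rcases le_or_gt j m with hjm | hjm
  · exact (sum_Ico_transmitterStrategy_mul hZ0 hm.le hjm).ge
  · rw [sum_eq_zero fun i hi => by
      rw [transmitterStrategy_of_lt (by simp only [mem_Ico] at hi; omega), zero_mul]]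
    exact mul_nonpos_of_nonneg_of_nonpos hc (sub_nonpos.2 (hJ hm hj hjm))

theorem pay_transmitterStrategy_jammerStrategy (hJ0 : J 0 = 0)
    (hZ : AntitoneOn Z (Set.Iic n)) (hZn : 0 < Z n) (hmn : m ≤ n)
    (hD : JaveM m J Z < J (m + 1)) :
    pay n Z (transmitterStrategy m J Z) (jammerStrategy m Z) = Z m := by
  have hZm := pos_of_antitoneOn_Iic hZ hZn hmn
  have hZ0 : ∀ i ≤ m, Z i ≠ 0 := fun i hi => (pos_of_antitoneOn_Iic hZ hZn (hi.trans hmn)).ne'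
  have hy := isMixed_jammerStrategy (hZ.mono (Set.Iic_subset_Iic.2 hmn)) hZm hmn
  rw [pay_eq_of_col_eq (b := J (m + 1)) hy fun j _ hj => sum_Ico_transmitterStrategy_mul hZ0 hmn
      (not_lt.1 fun h => hj (jammerStrategy_of_lt h)),
    avgPow_jammerStrategy hJ0 hmn, div_mul_cancel₀ _ (sub_pos.2 hD).ne']

theorem isMixed_transmitterStrategy (hJ0 : J 0 = 0) (hJ : MonotoneOn J (Set.Iic n))
    (hZ : AntitoneOn Z (Set.Iic n)) (hZn : 0 < Z n) (hm : m < n)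
    (hD : JaveM m J Z < J (m + 1)) : IsMixed n (transmitterStrategy m J Z) := by
  have hZm := pos_of_antitoneOn_Iic hZ hZn hm.le
  have hZ0 : ∀ i ≤ m, Z i ≠ 0 := fun i hi => (pos_of_antitoneOn_Iic hZ hZn (hi.trans hm.le)).ne'
  refine ⟨fun i _ => transmitterStrategy_nonneg (hJ.mono (Set.Iic_subset_Iic.2 hm))
    (hZ.mono (Set.Iic_subset_Iic.2 hm.le)) hZm hD i, ?_⟩
  have hrow := pay_eq_of_row_eq (n := n) (y := jammerStrategy m Z)
    (x := transmitterStrategy m J Z) fun i _ hi =>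
      row_jammerStrategy hZ0 (not_lt.1 fun h => hi (transmitterStrategy_of_lt h))
  rw [pay_transmitterStrategy_jammerStrategy hJ0 hZ hZn hm.le hD] at hrow
  exact (mul_eq_left₀ hZm.ne').1 hrow.symm

end Equilibrium

theorem stmt_7_general (n : ℕ) (J Z : ℕ → ℝ)
    (hJ0 : J 0 = 0) (hJmono : ∀ j < n, J j < J (j + 1))
    (hZanti : ∀ j < n, Z (j + 1) < Z j) (hZpos : 0 < Z n)
    (m : ℕ) (hm : m < n) (xhat yhat : ℕ → ℝ)
    (hx : ∀ i, xhat i = if i ≤ m then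
      Z m * (J (i + 1) - J i) / ((J (m + 1) - JaveM m J Z) * Z i) else 0)
    (hy : ∀ j, yhat j = if j = 0 then Z m / Z 0
      else if j ≤ m then Z m * ((Z j)⁻¹ - (Z (j - 1))⁻¹) else 0) :
    IsMixed n xhat ∧
    YLE n J (JaveM m J Z) yhat ∧
    pay n Z xhat yhat = Z m ∧
    (∀ x : ℕ → ℝ, IsMixed n x → pay n Z x yhat ≤ Z m) ∧
    (∀ y : ℕ → ℝ, YLE n J (JaveM m J Z) y → Z m ≤ pay n Z xhat y) := by
  obtain rfl : xhat = transmitterStrategy m J Z := funext hx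
  obtain rfl : yhat = jammerStrategy m Z := funext hy
  have hJ := monotoneOn_Iic_of_le_succ fun j hj => (hJmono j hj).le
  have hZ := antitoneOn_Iic_of_succ_le fun j hj => (hZanti j hj).le
  have hZm := pos_of_antitoneOn_Iic hZ hZpos hm.le
  have hD : JaveM m J Z < J (m + 1) :=
    JaveM_lt hJ0 (hJ.mono (Set.Iic_subset_Iic.2 hm.le)) (hJmono m hm)
      (hZ.mono (Set.Iic_subset_Iic.2 hm.le)) hZm
  refine ⟨isMixed_transmitterStrategy hJ0 hJ hZ hZpos hm hD,
    ⟨isMixed_jammerStrategy (hZ.mono (Set.Iic_subset_Iic.2 hm.le)) hZm hm.le,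
      (avgPow_jammerStrategy hJ0 hm.le).le⟩,
    pay_transmitterStrategy_jammerStrategy hJ0 hZ hZpos hm.le hD,
    fun _ => pay_jammerStrategy_le hZ hZpos hm.le,
    fun _ => le_pay_transmitterStrategy hJ hZ hZpos hm hD⟩

/-- for `0 ≤ m < n` and budget `J_ave = J_{ave,m}`, the pair `(x̂, ŷ)` is a
Nash equilibrium of the constrained game with value `Z_m`. -/
theorem stmt_7 (n : ℕ) (hn : 1 ≤ n) (J Z : ℕ → ℝ)
    (hJ0 : J 0 = 0) (hJmono : ∀ j < n, J j < J (j + 1))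
    (hZanti : ∀ j < n, Z (j + 1) < Z j) (hZpos : 0 < Z n)
    (m : ℕ) (hm : m < n) (xhat yhat : ℕ → ℝ)
    (hx : ∀ i, xhat i = if i ≤ m then
      Z m * (J (i + 1) - J i) / ((J (m + 1) - JaveM m J Z) * Z i) else 0)
    (hy : ∀ j, yhat j = if j = 0 then Z m / Z 0
      else if j ≤ m then Z m * ((Z j)⁻¹ - (Z (j - 1))⁻¹) else 0) :
    IsMixed n xhat ∧
    YLE n J (JaveM m J Z) yhat ∧
    pay n Z xhat yhat = Z m ∧
    (∀ x : ℕ → ℝ, IsMixed n x → pay n Z x yhat ≤ Z m) ∧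
    (∀ y : ℕ → ℝ, YLE n J (JaveM m J Z) y → Z m ≤ pay n Z xhat y) :=
  stmt_7_general n J Z hJ0 hJmono hZanti hZpos m hm xhat yhat hx hy
end
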